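/- Let h > 0 and let f : ℝ≥0 → ℝ be continuous, non-negative, with f(0) = 0 and compact support, i.e. there exists K such that f(t) = 0 for all t ≥ K. Then the h-cut f_h := f − Λ_{0,h}(f) is continuous, non-negative, satisfies f_h(0) = 0, and f_h(t) = 0 for all t ≥ K. -/

import Mathlib

open Set
open scoped NNReal ENNReal

/-- Solution data for the two-sided Skorohod reflection problem of `f` on `[0,h]`:
`c0` and `ch` are the compensators at `0` and at `h`,
and `fun t => f t + ch t + c0 t` is the reflected path `Λ_{0,h}(f)`.
The support conditions on the measures `dc⁰` and `d(−cʰ)` are phrased as: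
the compensator is constant on every (closed) interval on which the reflected
path avoids the corresponding boundary. -/
structure SkorohodPair (h : ℝ) (f c0 ch : ℝ≥0 → ℝ) : Prop where
  cont0 : Continuous c0
  conth : Continuous ch
  init0 : c0 0 = 0
  inith : ch 0 = 0
  mem_Icc : ∀ t, f t + ch t + c0 t ∈ Set.Icc (0 : ℝ) h
  mono0 : Monotone c0
  antih : Antitone ch
  flat0 : ∀ a b : ℝ≥0, a ≤ b → (∀ t ∈ Set.Icc a b, f t + ch t + c0 t ≠ 0) → c0 b = c0 a
  flath : ∀ a b : ℝ≥0, a ≤ b → (∀ t ∈ Set.Icc a b, f t + ch t + c0 t ≠ h) → ch b = ch a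

/-!
Since `f ≥ 0`, the reflected path `Λ = f + cʰ + c⁰` can only reach `0` at times where
`cʰ + c⁰ ≤ 0`. If `cʰ + c⁰` were positive at some `t`, then on `(s, t]`, where `s` is the last
time before `t` at which `cʰ + c⁰ ≤ 0`, the path stays away from `0`, so `c⁰` is flat there while
`cʰ` decreases: `cʰ + c⁰` could not have grown from `s` to `t`. Hence `Λ ≤ f`, i.e. `f_h ≥ 0`,
and once `f` vanishes, `0 ≤ Λ ≤ f = 0` forces `f_h = 0`.
-/

theorem exists_lt_forall_Ioc_lt_of_continuous {α β : Type*}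
    [ConditionallyCompleteLinearOrder α] [TopologicalSpace α] [OrderTopology α]
    [LinearOrder β] [TopologicalSpace β] [OrderClosedTopology β]
    {g : α → β} (hg : Continuous g) {c : β} {a t : α} (hat : a ≤ t) (ha : g a ≤ c)
    (ht : c < g t) : ∃ s, s < t ∧ g s ≤ c ∧ ∀ u ∈ Ioc s t, c < g u := by
  set S := Icc a t ∩ {u | g u ≤ c}
  have hS : IsCompact S := isCompact_Icc.inter_right (isClosed_le hg continuous_const)
  obtain ⟨s, ⟨⟨-, hst⟩, hs⟩, hmax⟩ := hS.exists_isGreatest ⟨a, ⟨le_rfl, hat⟩, ha⟩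
  refine ⟨s, lt_of_le_of_ne hst (by rintro rfl; exact ht.not_ge hs), hs, fun u hu => ?_⟩
  by_contra! hgu
  exact hu.1.not_ge (hmax ⟨⟨(hmax ⟨⟨le_rfl, hat⟩, ha⟩).trans hu.1.le, hu.2⟩, hgu⟩)

namespace SkorohodPair

variable {h : ℝ} {f c0 ch : ℝ≥0 → ℝ}

theorem c0_eq_of_forall_Ioc_ne (hp : SkorohodPair h f c0 ch) {s t : ℝ≥0} (hst : s < t)
    (hne : ∀ u ∈ Ioc s t, f u + ch u + c0 u ≠ 0) : c0 t = c0 s := by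
  have hIoc : Ioc s t ⊆ {u | c0 u = c0 t} := fun u hu =>
    (hp.flat0 u t hu.2 fun v hv => hne v ⟨hu.1.trans_le hv.1, hv.2⟩).symm
  have hclosure : Icc s t ⊆ {u | c0 u = c0 t} := by
    rw [← closure_Ioc hst.ne]
    exact (isClosed_eq hp.cont0 continuous_const).closure_subset_iff.mpr hIoc
  exact (hclosure ⟨le_rfl, hst.le⟩).symm

theorem ch_add_c0_nonpos (hp : SkorohodPair h f c0 ch) (hpos : ∀ t, 0 ≤ f t) (t : ℝ≥0) :
    ch t + c0 t ≤ 0 := by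
  by_contra! ht
  obtain ⟨s, hst, hs, hgt⟩ := exists_lt_forall_Ioc_lt_of_continuous
    (g := fun u => ch u + c0 u) (hp.conth.add hp.cont0) (zero_le (a := t))
    (by simp [hp.init0, hp.inith]) ht
  have hc0 : c0 t = c0 s :=
    hp.c0_eq_of_forall_Ioc_ne hst fun u hu => by linarith [hgt u hu, hpos u]
  linarith [hp.antih hst.le]

end SkorohodPair

theorem h_cut_mem_C0 (h : ℝ) (f : ℝ≥0 → ℝ) (hf : Continuous f)
    (hpos : ∀ t, 0 ≤ f t) (K : ℝ≥0) (hK : ∀ t, K ≤ t → f t = 0)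
    (c0 ch : ℝ≥0 → ℝ) (hp : SkorohodPair h f c0 ch) :
    Continuous (fun t => f t - (f t + ch t + c0 t)) ∧
    (∀ t, 0 ≤ f t - (f t + ch t + c0 t)) ∧
    (f 0 - (f 0 + ch 0 + c0 0) = 0) ∧
    (∀ t, K ≤ t → f t - (f t + ch t + c0 t) = 0) := by
  have hle := hp.ch_add_c0_nonpos hpos
  refine ⟨hf.sub ((hf.add hp.conth).add hp.cont0), fun t => by linarith [hle t],
    by simp [hp.init0, hp.inith], fun t ht => ?_⟩
  linarith [(hp.mem_Icc t).1, hle t, hK t ht]
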